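/- arXiv:math/0506611 — 3 statements merged into one kernel-verified Lean document; each statement's English description precedes it below -/
import Mathlib

section
/- An element x of L satisfies ⟨x, x⟩ = −2 and ⟨x, κ⟩ = 0 if and only if x belongs to the set consisting of: ±(e_i − e_j) for 1 ≤ i < j ≤ 6; ±(e_0 − e_i − e_j − e_k) for 1 ≤ i < j < k ≤ 6; and ±(2e_0 − e_1 − e_2 − e_3 − e_4 − e_5 − e_6). (These are the 72 roots of the root system E_6 inside L.) -/
/-- The intersection form on the divisor class lattice `L = Fin 7 → ℤ`:
`⟨x, y⟩ = x₀y₀ − x₁y₁ − ⋯ − x₆y₆`. -/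
def form (x y : Fin 7 → ℤ) : ℤ :=
  x 0 * y 0 - x 1 * y 1 - x 2 * y 2 - x 3 * y 3 - x 4 * y 4 - x 5 * y 5 - x 6 * y 6

/-- The standard basis vectors `e 0, …, e 6` of `L`. -/
def e (i : Fin 7) : Fin 7 → ℤ := fun j => if j = i then 1 else 0

/-- The anticanonical class `κ = 3e₀ − e₁ − ⋯ − e₆`. -/
def kappa : Fin 7 → ℤ := (3 : ℤ) • e 0 - e 1 - e 2 - e 3 - e 4 - e 5 - e 6

/-- The simple roots `r₀ = e₀ − e₁ − e₂ − e₃` and `rᵢ = eᵢ − e_{i+1}` for `1 ≤ i ≤ 5`. -/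
def r : Fin 6 → (Fin 7 → ℤ) :=
  ![e 0 - e 1 - e 2 - e 3, e 1 - e 2, e 2 - e 3, e 3 - e 4, e 4 - e 5, e 5 - e 6]

set_option maxHeartbeats 2000000 in
lemma key_enum : ∀ c0 : Fin 5, ∀ b1 b2 b3 b4 b5 b6 : Fin 3,
    ((b1:ℤ)-1)+((b2:ℤ)-1)+((b3:ℤ)-1)+((b4:ℤ)-1)+((b5:ℤ)-1)+((b6:ℤ)-1) = -(3*((c0:ℤ)-2)) →
    ((b1:ℤ)-1)^2+((b2:ℤ)-1)^2+((b3:ℤ)-1)^2+((b4:ℤ)-1)^2+((b5:ℤ)-1)^2+((b6:ℤ)-1)^2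
      = ((c0:ℤ)-2)^2 + 2 →
    (let x : Fin 7 → ℤ := ![(c0:ℤ)-2, (b1:ℤ)-1, (b2:ℤ)-1, (b3:ℤ)-1, (b4:ℤ)-1, (b5:ℤ)-1, (b6:ℤ)-1]
     ((∃ i j : Fin 7, 0 < i ∧ i < j ∧ (x = e i - e j ∨ x = -(e i - e j))) ∨
       (∃ i j k : Fin 7, 0 < i ∧ i < j ∧ j < k ∧
          (x = e 0 - e i - e j - e k ∨ x = -(e 0 - e i - e j - e k))) ∨
       (x = (2 : ℤ) • e 0 - e 1 - e 2 - e 3 - e 4 - e 5 - e 6 ∨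
        x = -((2 : ℤ) • e 0 - e 1 - e 2 - e 3 - e 4 - e 5 - e 6)))) := by decide

lemma liftb (z : ℤ) (h1 : -1 ≤ z) (h2 : z ≤ 1) : ∃ b : Fin 3, (b:ℤ) - 1 = z := by
  refine ⟨⟨(z+1).toNat, by omega⟩, ?_⟩
  push_cast [Int.toNat_of_nonneg (by omega : (0:ℤ) ≤ z + 1)]
  omega

lemma liftc (z : ℤ) (h1 : -2 ≤ z) (h2 : z ≤ 2) : ∃ b : Fin 5, (b:ℤ) - 2 = z := by
  refine ⟨⟨(z+2).toNat, by omega⟩, ?_⟩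
  push_cast [Int.toNat_of_nonneg (by omega : (0:ℤ) ≤ z + 2)]
  omega

lemma pairdec : ∀ i j : Fin 7, 0 < i → i < j →
    (form (e i - e j) (e i - e j) = -2 ∧ form (e i - e j) kappa = 0) ∧
    (form (-(e i - e j)) (-(e i - e j)) = -2 ∧ form (-(e i - e j)) kappa = 0) := by decide

lemma tripdec : ∀ i j k : Fin 7, 0 < i → i < j → j < k →
    (form (e 0 - e i - e j - e k) (e 0 - e i - e j - e k) = -2 ∧
      form (e 0 - e i - e j - e k) kappa = 0) ∧
    (form (-(e 0 - e i - e j - e k)) (-(e 0 - e i - e j - e k)) = -2 ∧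
      form (-(e 0 - e i - e j - e k)) kappa = 0) := by decide

lemma topdec :
    (form ((2 : ℤ) • e 0 - e 1 - e 2 - e 3 - e 4 - e 5 - e 6) ((2 : ℤ) • e 0 - e 1 - e 2 - e 3 - e 4 - e 5 - e 6) = -2 ∧
     form ((2 : ℤ) • e 0 - e 1 - e 2 - e 3 - e 4 - e 5 - e 6) kappa = 0) ∧
    (form (-((2 : ℤ) • e 0 - e 1 - e 2 - e 3 - e 4 - e 5 - e 6)) (-((2 : ℤ) • e 0 - e 1 - e 2 - e 3 - e 4 - e 5 - e 6)) = -2 ∧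
     form (-((2 : ℤ) • e 0 - e 1 - e 2 - e 3 - e 4 - e 5 - e 6)) kappa = 0) := by decide

/-- The 72 roots of `E₆`: `x` satisfies `⟨x,x⟩ = −2` and `⟨x,κ⟩ = 0` iff `x` is
`±(eᵢ−eⱼ)` (`1 ≤ i < j ≤ 6`), `±(e₀−eᵢ−eⱼ−e_k)` (`1 ≤ i < j < k ≤ 6`), or
`±(2e₀−e₁−⋯−e₆)`. -/
theorem statement_2 (x : Fin 7 → ℤ) :
    (form x x = -2 ∧ form x kappa = 0) ↔
      ((∃ i j : Fin 7, 0 < i ∧ i < j ∧ (x = e i - e j ∨ x = -(e i - e j))) ∨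
       (∃ i j k : Fin 7, 0 < i ∧ i < j ∧ j < k ∧
          (x = e 0 - e i - e j - e k ∨ x = -(e 0 - e i - e j - e k))) ∨
       (x = (2 : ℤ) • e 0 - e 1 - e 2 - e 3 - e 4 - e 5 - e 6 ∨
        x = -((2 : ℤ) • e 0 - e 1 - e 2 - e 3 - e 4 - e 5 - e 6))) := by
  constructor
  · rintro ⟨h1, h2⟩
    obtain ⟨a0,a1,a2,a3,a4,a5,a6,ha⟩ : ∃ a0 a1 a2 a3 a4 a5 a6, x = ![a0,a1,a2,a3,a4,a5,a6] :=
      ⟨x 0, x 1, x 2, x 3, x 4, x 5, x 6, by funext i; fin_cases i <;> rfl⟩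
    subst ha
    have hv5 : (![a0,a1,a2,a3,a4,a5,a6] : Fin 7 → ℤ) 5 = a5 := rfl
    have hv6 : (![a0,a1,a2,a3,a4,a5,a6] : Fin 7 → ℤ) 6 = a6 := rfl
    have hs : a1^2 + a2^2 + a3^2 + a4^2 + a5^2 + a6^2 = a0^2 + 2 := by
      simp [form, hv5, hv6] at h1; nlinarith [h1]
    have hl : a1 + a2 + a3 + a4 + a5 + a6 = -(3*a0) := by
      simp [form, kappa, e, hv5, hv6] at h2; linarith
    clear h1 h2 hv5 hv6
    have hb0 : -2 ≤ a0 ∧ a0 ≤ 2 := by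
      have c : (a1+a2+a3+a4+a5+a6)^2 ≤ 6*(a1^2+a2^2+a3^2+a4^2+a5^2+a6^2) := by
        linarith [sq_nonneg (a1-a2), sq_nonneg (a1-a3), sq_nonneg (a1-a4), sq_nonneg (a1-a5),
          sq_nonneg (a1-a6), sq_nonneg (a2-a3), sq_nonneg (a2-a4), sq_nonneg (a2-a5),
          sq_nonneg (a2-a6), sq_nonneg (a3-a4), sq_nonneg (a3-a5), sq_nonneg (a3-a6),
          sq_nonneg (a4-a5), sq_nonneg (a4-a6), sq_nonneg (a5-a6)]
      rw [hl, hs] at c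
      constructor
      · nlinarith [c, sq_nonneg (a0+2)]
      · nlinarith [c, sq_nonneg (a0-2)]
    -- Cauchy–Schwarz bound for each variable
    have cauchy : ∀ b1 b2 b3 b4 b5 b6 : ℤ, b1 + b2 + b3 + b4 + b5 + b6 = -(3*a0) →
        b1^2 + b2^2 + b3^2 + b4^2 + b5^2 + b6^2 = a0^2 + 2 →
        -1 ≤ b1 ∧ b1 ≤ 1 := by
      intro b1 b2 b3 b4 b5 b6 l s
      have c1 : (b2+b3+b4+b5+b6)^2 ≤ 5*(b2^2+b3^2+b4^2+b5^2+b6^2) := by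
        linarith [sq_nonneg (b2-b3), sq_nonneg (b2-b4), sq_nonneg (b2-b5), sq_nonneg (b2-b6),
          sq_nonneg (b3-b4), sq_nonneg (b3-b5), sq_nonneg (b3-b6), sq_nonneg (b4-b5),
          sq_nonneg (b4-b6), sq_nonneg (b5-b6)]
      have c2 : b2+b3+b4+b5+b6 = -(3*a0) - b1 := by linarith
      rw [c2] at c1
      constructor
      · by_contra hc
        have hb : b1 ≤ -2 := by omega
        nlinarith [c1, sq_nonneg (4*a0+3*b1), sq_nonneg (b1+2)]
      · by_contra hc
        have hb : 2 ≤ b1 := by omega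
        nlinarith [c1, sq_nonneg (4*a0+3*b1), sq_nonneg (b1-2)]
    have hb1 := cauchy a1 a2 a3 a4 a5 a6 hl hs
    have hb2 := cauchy a2 a1 a3 a4 a5 a6 (by linarith) (by linarith)
    have hb3 := cauchy a3 a1 a2 a4 a5 a6 (by linarith) (by linarith)
    have hb4 := cauchy a4 a1 a2 a3 a5 a6 (by linarith) (by linarith)
    have hb5 := cauchy a5 a1 a2 a3 a4 a6 (by linarith) (by linarith)
    have hb6 := cauchy a6 a1 a2 a3 a4 a5 (by linarith) (by linarith)
    obtain ⟨c0, hc0⟩ := liftc a0 hb0.1 hb0.2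
    obtain ⟨b1, hB1⟩ := liftb a1 hb1.1 hb1.2
    obtain ⟨b2, hB2⟩ := liftb a2 hb2.1 hb2.2
    obtain ⟨b3, hB3⟩ := liftb a3 hb3.1 hb3.2
    obtain ⟨b4, hB4⟩ := liftb a4 hb4.1 hb4.2
    obtain ⟨b5, hB5⟩ := liftb a5 hb5.1 hb5.2
    obtain ⟨b6, hB6⟩ := liftb a6 hb6.1 hb6.2
    subst hc0 hB1 hB2 hB3 hB4 hB5 hB6
    exact key_enum c0 b1 b2 b3 b4 b5 b6 hl hs
  · rintro (⟨i,j,hi,hij,(rfl|rfl)⟩|⟨i,j,k,hi,hij,hjk,(rfl|rfl)⟩|(rfl|rfl))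
    · exact (pairdec i j hi hij).1
    · exact (pairdec i j hi hij).2
    · exact (tripdec i j k hi hij hjk).1
    · exact (tripdec i j k hi hij hjk).2
    · exact topdec.1
    · exact topdec.2
end

section
/- The orbit of e_0 under the Weyl group W_6 consists exactly of the following classes: e_0; 2e_0 − e_i − e_j − e_k for distinct 1 ≤ i < j < k ≤ 6; 3e_0 − 2e_i − e_j − e_k − e_l − e_m for five distinct indices i, j, k, l, m in {1, …, 6}; 4e_0 − 2e_i − 2e_j − 2e_k − e_l − e_m − e_n where {i, j, k, l, m, n} = {1, …, 6}; and 5e_0 − 2e_1 − 2e_2 − 2e_3 − 2e_4 − 2e_5 − 2e_6. -/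
lemma form_add_left (x y v : Fin 7 → ℤ) : form (x + y) v = form x v + form y v := by
  simp only [form, Pi.add_apply]; ring

lemma form_smul_left (c : ℤ) (x v : Fin 7 → ℤ) : form (c • x) v = c * form x v := by
  simp only [form, Pi.smul_apply, smul_eq_mul]; ring

/-- The reflection `x ↦ x + ⟨x, v⟩·v` as a ℤ-linear map. -/
def reflMap (v : Fin 7 → ℤ) : (Fin 7 → ℤ) →ₗ[ℤ] (Fin 7 → ℤ) where
  toFun x := x + form x v • v
  map_add' x y := by
    funext j
    simp only [form, Pi.add_apply, Pi.smul_apply, smul_eq_mul]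
    ring
  map_smul' c x := by
    funext j
    simp only [form, Pi.add_apply, Pi.smul_apply, smul_eq_mul, RingHom.id_apply]
    ring

lemma reflMap_invol (v : Fin 7 → ℤ) (hv : form v v = -2) (x : Fin 7 → ℤ) :
    reflMap v (reflMap v x) = x := by
  show (x + form x v • v) + form (x + form x v • v) v • v = x
  rw [form_add_left, form_smul_left, hv]
  module

/-- The reflection `sᵢ(x) = x + ⟨x, rᵢ⟩·rᵢ` through the simple root `rᵢ`,
as a ℤ-linear automorphism of `L`. -/
def s (i : Fin 6) : (Fin 7 → ℤ) ≃ₗ[ℤ] (Fin 7 → ℤ) :=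
  LinearEquiv.ofLinear (reflMap (r i)) (reflMap (r i))
    (LinearMap.ext fun x => reflMap_invol (r i) (by fin_cases i <;> decide) x)
    (LinearMap.ext fun x => reflMap_invol (r i) (by fin_cases i <;> decide) x)

/-- The Weyl group `W₆`: the subgroup of the group of ℤ-linear automorphisms of `L`
generated by the reflections `s₀, …, s₅`. -/
def W6 : Subgroup ((Fin 7 → ℤ) ≃ₗ[ℤ] (Fin 7 → ℤ)) :=
  Subgroup.closure (Set.range s)

/-- The sum `e₁ + e₂ + e₃ + e₄ + e₅ + e₆`. -/
def sumE : Fin 7 → ℤ := e 1 + e 2 + e 3 + e 4 + e 5 + e 6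

/-! `W₆` preserves the form and fixes `κ`, so the orbit of `e₀` lies in the set of classes `x`
with `x² = 1` and `κ·x = 3`. For such `x` one has the identity
`∑ᵢ (2xᵢ + x₀ - 1)² = 2(x₀ - 1)(5 - x₀)`, which confines them to a finite box where they are
checked to be exactly the listed classes. Conversely, with `ρ = (0, 1, …, 6)` every simple root
has `⟨rᵢ, ρ⟩ > 0`, so reflecting `x` in a root with `⟨x, rᵢ⟩ < 0` lowers `⟨x, ρ⟩`, which is
nonnegative on these classes; this descent ends at a class with all `⟨x, rᵢ⟩ ≥ 0`, and the only such class is `e₀`. -/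

open Finset

lemma form_comm (x y : Fin 7 → ℤ) : form x y = form y x := by
  simp only [form]; ring

lemma form_add_right (x y v : Fin 7 → ℤ) : form v (x + y) = form v x + form v y := by
  rw [form_comm, form_add_left, form_comm x, form_comm y]

lemma form_smul_right (c : ℤ) (x v : Fin 7 → ℤ) : form v (c • x) = c * form v x := by
  rw [form_comm, form_smul_left, form_comm]

lemma form_self (x : Fin 7 → ℤ) :
    form x x = x 0 ^ 2 - x 1 ^ 2 - x 2 ^ 2 - x 3 ^ 2 - x 4 ^ 2 - x 5 ^ 2 - x 6 ^ 2 := by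
  simp only [form]; ring

lemma form_kappa (x : Fin 7 → ℤ) :
    form x kappa = 3 * x 0 + x 1 + x 2 + x 3 + x 4 + x 5 + x 6 := by
  change x 0 * 3 - x 1 * -1 - x 2 * -1 - x 3 * -1 - x 4 * -1 - x 5 * -1 - x 6 * -1 = _
  ring

lemma reflMap_apply (v x : Fin 7 → ℤ) : reflMap v x = x + form x v • v := rfl

lemma form_reflMap_reflMap {v : Fin 7 → ℤ} (hv : form v v = -2) (x y : Fin 7 → ℤ) :
    form (reflMap v x) (reflMap v y) = form x y := by
  simp only [reflMap_apply, form_add_left, form_add_right, form_smul_left, form_smul_right, hv]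
  rw [form_comm v y]
  ring

lemma reflMap_eq_self {v x : Fin 7 → ℤ} (h : form x v = 0) : reflMap v x = x := by
  rw [reflMap_apply, h, zero_smul, add_zero]

lemma form_r_self (i : Fin 6) : form (r i) (r i) = -2 := by
  fin_cases i <;> decide

lemma form_kappa_r (i : Fin 6) : form kappa (r i) = 0 := by
  fin_cases i <;> decide

lemma s_apply (i : Fin 6) (x : Fin 7 → ℤ) : s i x = reflMap (r i) x := rfl

lemma s_s_apply (i : Fin 6) (x : Fin 7 → ℤ) : s i (s i x) = x :=
  reflMap_invol (r i) (form_r_self i) x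

lemma s_mem_W6 (i : Fin 6) : s i ∈ W6 :=
  Subgroup.subset_closure ⟨i, rfl⟩

lemma form_apply_apply_of_mem_W6 {w : (Fin 7 → ℤ) ≃ₗ[ℤ] (Fin 7 → ℤ)} (hw : w ∈ W6)
    (x y : Fin 7 → ℤ) : form (w x) (w y) = form x y := by
  induction hw using Subgroup.closure_induction generalizing x y with
  | mem g hg =>
    obtain ⟨i, rfl⟩ := hg
    exact form_reflMap_reflMap (form_r_self i) x y
  | one => rfl
  | mul g₁ g₂ _ _ h₁ h₂ => exact (h₁ _ _).trans (h₂ x y)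
  | inv g _ h =>
    simpa only [LinearEquiv.coe_inv, LinearEquiv.apply_symm_apply] using (h (g⁻¹ x) (g⁻¹ y)).symm

lemma W6_le_stabilizer_kappa : W6 ≤ MulAction.stabilizer _ kappa :=
  (Subgroup.closure_le _).mpr <| Set.range_subset_iff.mpr fun i =>
    reflMap_eq_self (form_kappa_r i)

/-- On the cubic surface these are the classes of twisted cubics. -/
def IsTwistedCubicClass (x : Fin 7 → ℤ) : Prop := form x x = 1 ∧ form x kappa = 3

instance : DecidablePred IsTwistedCubicClass := fun x => by
  unfold IsTwistedCubicClass; infer_instance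

lemma isTwistedCubicClass_e_zero : IsTwistedCubicClass (e 0) := by decide

lemma IsTwistedCubicClass.apply_of_mem_W6 {x : Fin 7 → ℤ} (hx : IsTwistedCubicClass x)
    {w : (Fin 7 → ℤ) ≃ₗ[ℤ] (Fin 7 → ℤ)} (hw : w ∈ W6) : IsTwistedCubicClass (w x) := by
  have hκ : w kappa = kappa := W6_le_stabilizer_kappa hw
  constructor
  · rw [form_apply_apply_of_mem_W6 hw, hx.1]
  · rw [← hκ, form_apply_apply_of_mem_W6 hw, hx.2]

lemma IsTwistedCubicClass.sum_sq {x : Fin 7 → ℤ} (hx : IsTwistedCubicClass x) :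
    ∑ i : Fin 6, (2 * x i.succ + x 0 - 1) ^ 2 = 2 * (x 0 - 1) * (5 - x 0) := by
  obtain ⟨h₁, h₂⟩ := hx
  rw [form_self] at h₁
  rw [form_kappa] at h₂
  simp only [Fin.sum_univ_six, Fin.succ_zero_eq_one, Fin.succ_one_eq_two, Fin.reduceSucc]
  linear_combination (-4) * h₁ + 4 * (x 0 - 1) * h₂

noncomputable def degreeBox (d : ℤ) : Finset (Fin 7 → ℤ) :=
  Fintype.piFinset fun i =>
    if i = 0 then {d} else (Icc (-3) 1).filter fun a => (2 * a + d - 1) ^ 2 ≤ 2 * (d - 1) * (5 - d)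

lemma IsTwistedCubicClass.mem_degreeBox {x : Fin 7 → ℤ} (hx : IsTwistedCubicClass x) :
    x 0 ∈ Icc 1 5 ∧ x ∈ degreeBox (x 0) := by
  have hle : ∀ i : Fin 6, (2 * x i.succ + x 0 - 1) ^ 2 ≤ 2 * (x 0 - 1) * (5 - x 0) := fun i =>
    hx.sum_sq ▸ single_le_sum (fun j _ => sq_nonneg (2 * x j.succ + x 0 - 1)) (mem_univ i)
  have hd : 1 ≤ x 0 ∧ x 0 ≤ 5 := by
    constructor <;> nlinarith [hle 0, sq_nonneg (2 * x (Fin.succ 0) + x 0 - 1)]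
  refine ⟨mem_Icc.mpr hd, Fintype.mem_piFinset.mpr fun i => ?_⟩
  cases i using Fin.cases with
  | zero => simp
  | succ i =>
    simp only [Fin.succ_ne_zero, if_false, mem_filter, mem_Icc]
    refine ⟨⟨?_, ?_⟩, hle i⟩ <;> nlinarith [hle i]

lemma IsTwistedCubicClass.of_forall_degreeBox {P : (Fin 7 → ℤ) → Prop}
    (h : ∀ d ∈ Icc (1 : ℤ) 5, ∀ x ∈ degreeBox d, IsTwistedCubicClass x → P x)
    {x : Fin 7 → ℤ} (hx : IsTwistedCubicClass x) : P x :=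
  h _ hx.mem_degreeBox.1 x hx.mem_degreeBox.2 hx

def HasListedShape (x : Fin 7 → ℤ) : Prop :=
  x = e 0 ∨
  (∃ i j k : Fin 7, 0 < i ∧ i < j ∧ j < k ∧ x = (2 : ℤ) • e 0 - e i - e j - e k) ∨
  (∃ i n : Fin 7, 0 < i ∧ 0 < n ∧ i ≠ n ∧ x = (3 : ℤ) • e 0 - sumE - e i + e n) ∨
  (∃ i j k : Fin 7, 0 < i ∧ i < j ∧ j < k ∧ x = (4 : ℤ) • e 0 - sumE - e i - e j - e k) ∨
  x = (5 : ℤ) • e 0 - (2 : ℤ) • sumE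

instance : DecidablePred HasListedShape := fun x => by
  unfold HasListedShape; infer_instance

set_option maxRecDepth 10000 in
lemma IsTwistedCubicClass.hasListedShape {x : Fin 7 → ℤ} (hx : IsTwistedCubicClass x) :
    HasListedShape x :=
  hx.of_forall_degreeBox (P := HasListedShape) (by decide)

lemma HasListedShape.isTwistedCubicClass {x : Fin 7 → ℤ} (hx : HasListedShape x) :
    IsTwistedCubicClass x := by
  rcases hx with rfl | ⟨i, j, k, hi, hj, hk, rfl⟩ | ⟨i, n, hi, hn, hin, rfl⟩ |
    ⟨i, j, k, hi, hj, hk, rfl⟩ | rfl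
  · exact isTwistedCubicClass_e_zero
  · revert i j k; decide
  · revert i n; decide
  · revert i j k; decide
  · decide

set_option maxRecDepth 10000 in
lemma IsTwistedCubicClass.eq_e_zero_of_dominant {x : Fin 7 → ℤ} (hx : IsTwistedCubicClass x) :
    (∀ i, 0 ≤ form x (r i)) → x = e 0 :=
  hx.of_forall_degreeBox (P := fun x => (∀ i, 0 ≤ form x (r i)) → x = e 0) (by decide)

def rho : Fin 7 → ℤ := ![0, 1, 2, 3, 4, 5, 6]

lemma form_r_rho_pos (i : Fin 6) : 0 < form (r i) rho := by
  fin_cases i <;> decide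

set_option maxRecDepth 10000 in
lemma IsTwistedCubicClass.form_rho_nonneg {x : Fin 7 → ℤ} (hx : IsTwistedCubicClass x) :
    0 ≤ form x rho :=
  hx.of_forall_degreeBox (P := (0 ≤ form · rho)) (by decide)

lemma form_s_rho (i : Fin 6) (x : Fin 7 → ℤ) :
    form (s i x) rho = form x rho + form x (r i) * form (r i) rho := by
  rw [s_apply, reflMap_apply, form_add_left, form_smul_left]

lemma IsTwistedCubicClass.mem_orbit {x : Fin 7 → ℤ} (hx : IsTwistedCubicClass x) :
    ∃ w ∈ W6, w (e 0) = x := by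
  induction hn : (form x rho).toNat using Nat.strong_induction_on generalizing x with
  | _ n ih =>
  by_cases hdom : ∀ i, 0 ≤ form x (r i)
  · exact ⟨1, W6.one_mem, (hx.eq_e_zero_of_dominant hdom).symm⟩
  obtain ⟨i, hi⟩ : ∃ i, form x (r i) < 0 := by simpa only [not_forall, not_le] using hdom
  have hy := hx.apply_of_mem_W6 (s_mem_W6 i)
  have hdrop := mul_neg_of_neg_of_pos hi (form_r_rho_pos i)
  have hy₀ := hy.form_rho_nonneg
  obtain ⟨w, hw, hwx⟩ := ih _ (by rw [form_s_rho] at hy₀ ⊢; omega) hy rfl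
  exact ⟨s i * w, W6.mul_mem (s_mem_W6 i) hw, by rw [LinearEquiv.mul_apply, hwx, s_s_apply]⟩

/-- The `W₆`-orbit of `e₀`. -/
theorem statement_5 (x : Fin 7 → ℤ) :
    (∃ w ∈ W6, w (e 0) = x) ↔
      (x = e 0 ∨
       (∃ i j k : Fin 7, 0 < i ∧ i < j ∧ j < k ∧
          x = (2 : ℤ) • e 0 - e i - e j - e k) ∨
       (∃ i n : Fin 7, 0 < i ∧ 0 < n ∧ i ≠ n ∧
          x = (3 : ℤ) • e 0 - sumE - e i + e n) ∨
       (∃ i j k : Fin 7, 0 < i ∧ i < j ∧ j < k ∧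
          x = (4 : ℤ) • e 0 - sumE - e i - e j - e k) ∨
       x = (5 : ℤ) • e 0 - (2 : ℤ) • sumE) := by
  constructor
  · rintro ⟨w, hw, rfl⟩
    exact (isTwistedCubicClass_e_zero.apply_of_mem_W6 hw).hasListedShape
  · intro hx
    exact HasListedShape.isTwistedCubicClass hx |>.mem_orbit
end

section
/- For every root x ∈ L, exactly one of x and −x is a nonnegative integer linear combination of the simple roots r_0, r_1, …, r_5. (Half of the 72 roots are positive roots, and the remaining roots are their additive inverses.) -/
lemma r_zero : r 0 = e 0 - e 1 - e 2 - e 3 := rfl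
lemma r_one : r 1 = e 1 - e 2 := rfl
lemma r_two : r 2 = e 2 - e 3 := rfl
lemma r_three : r 3 = e 3 - e 4 := rfl
lemma r_four : r 4 = e 4 - e 5 := rfl
lemma r_five : r 5 = e 5 - e 6 := rfl

lemma sum_coords (c : Fin 6 → ℤ) :
    (∑ i, c i • r i) 0 = c 0 ∧ (∑ i, c i • r i) 1 = -c 0 + c 1 ∧
    (∑ i, c i • r i) 2 = -c 0 - c 1 + c 2 ∧ (∑ i, c i • r i) 3 = -c 0 - c 2 + c 3 ∧
    (∑ i, c i • r i) 4 = -c 3 + c 4 ∧ (∑ i, c i • r i) 5 = -c 4 + c 5 ∧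
    (∑ i, c i • r i) 6 = -c 5 := by
  refine ⟨?_, ?_, ?_, ?_, ?_, ?_, ?_⟩ <;>
    · rw [Finset.sum_apply, Fin.sum_univ_six, r_zero, r_one, r_two, r_three, r_four, r_five]
      simp +decide [e]
      try ring

lemma eq_sum_of_coords (x : Fin 7 → ℤ) (c : Fin 6 → ℤ)
    (h0 : x 0 = c 0) (h1 : x 1 = -c 0 + c 1) (h2 : x 2 = -c 0 - c 1 + c 2)
    (h3 : x 3 = -c 0 - c 2 + c 3) (h4 : x 4 = -c 3 + c 4) (h5 : x 5 = -c 4 + c 5)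
    (h6 : x 6 = -c 5) : x = ∑ i, c i • r i := by
  obtain ⟨s0, s1, s2, s3, s4, s5, s6⟩ := sum_coords c
  funext j
  fin_cases j
  · exact h0.trans s0.symm
  · exact h1.trans s1.symm
  · exact h2.trans s2.symm
  · exact h3.trans s3.symm
  · exact h4.trans s4.symm
  · exact h5.trans s5.symm
  · exact h6.trans s6.symm

/-- Characterization: `x` is a nonnegative combination of simple roots iff the six
canonical coefficients are nonnegative. -/
lemma pos_char (x : Fin 7 → ℤ) (hk : 3 * x 0 + x 1 + x 2 + x 3 + x 4 + x 5 + x 6 = 0) :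
    (∃ a : Fin 6 → ℕ, x = ∑ i, (a i : ℤ) • r i) ↔
    (0 ≤ x 0 ∧ 0 ≤ x 0 + x 1 ∧ 0 ≤ 2*x 0 + x 1 + x 2 ∧ 0 ≤ 3*x 0 + x 1 + x 2 + x 3 ∧
     0 ≤ 3*x 0 + x 1 + x 2 + x 3 + x 4 ∧ 0 ≤ 3*x 0 + x 1 + x 2 + x 3 + x 4 + x 5) := by
  constructor
  · rintro ⟨a, rfl⟩
    obtain ⟨s0, s1, s2, s3, s4, s5, s6⟩ := sum_coords (fun i => (a i : ℤ))
    rw [s0, s1, s2, s3, s4, s5]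
    omega
  · rintro ⟨p0, p1, p2, p3, p4, p5⟩
    refine ⟨![(x 0).toNat, (x 0 + x 1).toNat, (2*x 0 + x 1 + x 2).toNat,
      (3*x 0 + x 1 + x 2 + x 3).toNat, (3*x 0 + x 1 + x 2 + x 3 + x 4).toNat,
      (3*x 0 + x 1 + x 2 + x 3 + x 4 + x 5).toNat],
      eq_sum_of_coords x _ ?_ ?_ ?_ ?_ ?_ ?_ ?_⟩
    · show x 0 = ((x 0).toNat : ℤ); omega
    · show x 1 = -((x 0).toNat : ℤ) + ((x 0 + x 1).toNat : ℤ); omega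
    · show x 2 = -((x 0).toNat : ℤ) - ((x 0 + x 1).toNat : ℤ) + ((2*x 0 + x 1 + x 2).toNat : ℤ)
      omega
    · show x 3 = -((x 0).toNat : ℤ) - ((2*x 0 + x 1 + x 2).toNat : ℤ)
        + ((3*x 0 + x 1 + x 2 + x 3).toNat : ℤ)
      omega
    · show x 4 = -((3*x 0 + x 1 + x 2 + x 3).toNat : ℤ)
        + ((3*x 0 + x 1 + x 2 + x 3 + x 4).toNat : ℤ)
      omega
    · show x 5 = -((3*x 0 + x 1 + x 2 + x 3 + x 4).toNat : ℤ)
        + ((3*x 0 + x 1 + x 2 + x 3 + x 4 + x 5).toNat : ℤ)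
      omega
    · show x 6 = -((3*x 0 + x 1 + x 2 + x 3 + x 4 + x 5).toNat : ℤ); omega

lemma dec0 : ∀ c1 ∈ Finset.Icc (-1:ℤ) 1, ∀ c2 ∈ Finset.Icc (-1:ℤ) 1, ∀ c3 ∈ Finset.Icc (-1:ℤ) 1,
    ∀ c4 ∈ Finset.Icc (-1:ℤ) 1, ∀ c5 ∈ Finset.Icc (-1:ℤ) 1, ∀ c6 ∈ Finset.Icc (-1:ℤ) 1,
    c1+c2+c3+c4+c5+c6 = 0 →
    (0 ≤ c1 ∧ 0 ≤ c1 + c2 ∧ 0 ≤ c1 + c2 + c3 ∧ 0 ≤ c1 + c2 + c3 + c4 ∧ 0 ≤ c1 + c2 + c3 + c4 + c5) ∨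
    (c1 ≤ 0 ∧ c1 + c2 ≤ 0 ∧ c1 + c2 + c3 ≤ 0 ∧ c1 + c2 + c3 + c4 ≤ 0 ∧ c1 + c2 + c3 + c4 + c5 ≤ 0) ∨
    ¬ (c1*c1+c2*c2+c3*c3+c4*c4+c5*c5+c6*c6 = 2) := by decide

lemma int_sq_nonneg' (t : ℤ) : 0 ≤ t * (t + 1) := by nlinarith [sq_nonneg (2*t+1)]
lemma int_sq_nonneg'' (t : ℤ) : 0 ≤ t * (t - 1) := by nlinarith [sq_nonneg (2*t-1)]
lemma int_zero_of (t : ℤ) (h : t * (t+1) = 0) : -1 ≤ t ∧ t ≤ 0 := by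
  rcases mul_eq_zero.mp h with h | h <;> omega
lemma int_zero_of' (t : ℤ) (h : t * (t-1) = 0) : 0 ≤ t ∧ t ≤ 1 := by
  rcases mul_eq_zero.mp h with h | h <;> omega
lemma int_abs_le_one (t : ℤ) (h : t * t ≤ 2) : -1 ≤ t ∧ t ≤ 1 := by
  constructor <;> nlinarith
lemma eq_zero_of_sq_nonpos (t : ℤ) (h : t * t ≤ 0) : t = 0 :=
  mul_self_eq_zero.mp (le_antisymm h (mul_self_nonneg t))

lemma sign_lemma (c0 c1 c2 c3 c4 c5 c6 : ℤ)
    (h1 : c0*c0 - c1*c1 - c2*c2 - c3*c3 - c4*c4 - c5*c5 - c6*c6 = -2)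
    (h2 : 3*c0 + c1 + c2 + c3 + c4 + c5 + c6 = 0) :
    (0 ≤ c0 ∧ 0 ≤ c0 + c1 ∧ 0 ≤ 2*c0 + c1 + c2 ∧ 0 ≤ 3*c0 + c1 + c2 + c3 ∧
     0 ≤ 3*c0 + c1 + c2 + c3 + c4 ∧ 0 ≤ 3*c0 + c1 + c2 + c3 + c4 + c5) ∨
    (c0 ≤ 0 ∧ c0 + c1 ≤ 0 ∧ 2*c0 + c1 + c2 ≤ 0 ∧ 3*c0 + c1 + c2 + c3 ≤ 0 ∧
     3*c0 + c1 + c2 + c3 + c4 ≤ 0 ∧ 3*c0 + c1 + c2 + c3 + c4 + c5 ≤ 0) := by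
  have h2sq : (c1+c2+c3+c4+c5+c6)*(c1+c2+c3+c4+c5+c6) = 9*(c0*c0) := by
    have h : c1+c2+c3+c4+c5+c6 = -3*c0 := by linarith
    rw [h]; ring
  have hb : 3 * (c0 * c0) ≤ 12 := by
    nlinarith [sq_nonneg (c1-c2), sq_nonneg (c1-c3), sq_nonneg (c1-c4), sq_nonneg (c1-c5),
      sq_nonneg (c1-c6), sq_nonneg (c2-c3), sq_nonneg (c2-c4), sq_nonneg (c2-c5),
      sq_nonneg (c2-c6), sq_nonneg (c3-c4), sq_nonneg (c3-c5), sq_nonneg (c3-c6),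
      sq_nonneg (c4-c5), sq_nonneg (c4-c6), sq_nonneg (c5-c6), h2sq, h1]
  have hb0 : -2 ≤ c0 := by nlinarith
  have hb0' : c0 ≤ 2 := by nlinarith
  interval_cases c0
  · -- c0 = -2 : all ci = 1
    have s : (c1-1)*(c1-1) + (c2-1)*(c2-1) + (c3-1)*(c3-1) + (c4-1)*(c4-1) + (c5-1)*(c5-1) + (c6-1)*(c6-1) = 0 := by
      linear_combination -h1 - 2*h2
    have e1 : c1 - 1 = 0 := eq_zero_of_sq_nonpos _ (by linarith [mul_self_nonneg (c2 - 1), mul_self_nonneg (c3 - 1), mul_self_nonneg (c4 - 1), mul_self_nonneg (c5 - 1), mul_self_nonneg (c6 - 1)])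
    have e2 : c2 - 1 = 0 := eq_zero_of_sq_nonpos _ (by linarith [mul_self_nonneg (c1 - 1), mul_self_nonneg (c3 - 1), mul_self_nonneg (c4 - 1), mul_self_nonneg (c5 - 1), mul_self_nonneg (c6 - 1)])
    have e3 : c3 - 1 = 0 := eq_zero_of_sq_nonpos _ (by linarith [mul_self_nonneg (c1 - 1), mul_self_nonneg (c2 - 1), mul_self_nonneg (c4 - 1), mul_self_nonneg (c5 - 1), mul_self_nonneg (c6 - 1)])
    have e4 : c4 - 1 = 0 := eq_zero_of_sq_nonpos _ (by linarith [mul_self_nonneg (c1 - 1), mul_self_nonneg (c2 - 1), mul_self_nonneg (c3 - 1), mul_self_nonneg (c5 - 1), mul_self_nonneg (c6 - 1)])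
    have e5 : c5 - 1 = 0 := eq_zero_of_sq_nonpos _ (by linarith [mul_self_nonneg (c1 - 1), mul_self_nonneg (c2 - 1), mul_self_nonneg (c3 - 1), mul_self_nonneg (c4 - 1), mul_self_nonneg (c6 - 1)])
    omega
  · -- c0 = -1 : ci ∈ {0,1}
    have s : c1*(c1-1) + c2*(c2-1) + c3*(c3-1) + c4*(c4-1) + c5*(c5-1) + c6*(c6-1) = 0 := by
      linear_combination -h1 - h2
    have z1 := int_zero_of' c1 (le_antisymm (by linarith [int_sq_nonneg'' c2, int_sq_nonneg'' c3, int_sq_nonneg'' c4, int_sq_nonneg'' c5, int_sq_nonneg'' c6]) (int_sq_nonneg'' c1))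
    have z2 := int_zero_of' c2 (le_antisymm (by linarith [int_sq_nonneg'' c1, int_sq_nonneg'' c3, int_sq_nonneg'' c4, int_sq_nonneg'' c5, int_sq_nonneg'' c6]) (int_sq_nonneg'' c2))
    have z3 := int_zero_of' c3 (le_antisymm (by linarith [int_sq_nonneg'' c1, int_sq_nonneg'' c2, int_sq_nonneg'' c4, int_sq_nonneg'' c5, int_sq_nonneg'' c6]) (int_sq_nonneg'' c3))
    have z4 := int_zero_of' c4 (le_antisymm (by linarith [int_sq_nonneg'' c1, int_sq_nonneg'' c2, int_sq_nonneg'' c3, int_sq_nonneg'' c5, int_sq_nonneg'' c6]) (int_sq_nonneg'' c4))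
    have z5 := int_zero_of' c5 (le_antisymm (by linarith [int_sq_nonneg'' c1, int_sq_nonneg'' c2, int_sq_nonneg'' c3, int_sq_nonneg'' c4, int_sq_nonneg'' c6]) (int_sq_nonneg'' c5))
    have z6 := int_zero_of' c6 (le_antisymm (by linarith [int_sq_nonneg'' c1, int_sq_nonneg'' c2, int_sq_nonneg'' c3, int_sq_nonneg'' c4, int_sq_nonneg'' c5]) (int_sq_nonneg'' c6))
    omega
  · -- c0 = 0
    have s : c1*c1 + c2*c2 + c3*c3 + c4*c4 + c5*c5 + c6*c6 = 2 := by linear_combination -h1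
    have b1 := int_abs_le_one c1 (by linarith [mul_self_nonneg c2, mul_self_nonneg c3, mul_self_nonneg c4, mul_self_nonneg c5, mul_self_nonneg c6])
    have b2 := int_abs_le_one c2 (by linarith [mul_self_nonneg c1, mul_self_nonneg c3, mul_self_nonneg c4, mul_self_nonneg c5, mul_self_nonneg c6])
    have b3 := int_abs_le_one c3 (by linarith [mul_self_nonneg c1, mul_self_nonneg c2, mul_self_nonneg c4, mul_self_nonneg c5, mul_self_nonneg c6])
    have b4 := int_abs_le_one c4 (by linarith [mul_self_nonneg c1, mul_self_nonneg c2, mul_self_nonneg c3, mul_self_nonneg c5, mul_self_nonneg c6])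
    have b5 := int_abs_le_one c5 (by linarith [mul_self_nonneg c1, mul_self_nonneg c2, mul_self_nonneg c3, mul_self_nonneg c4, mul_self_nonneg c6])
    have b6 := int_abs_le_one c6 (by linarith [mul_self_nonneg c1, mul_self_nonneg c2, mul_self_nonneg c3, mul_self_nonneg c4, mul_self_nonneg c5])
    have hsum : c1+c2+c3+c4+c5+c6 = 0 := by linarith
    have := dec0 c1 (Finset.mem_Icc.mpr b1) c2 (Finset.mem_Icc.mpr b2) c3 (Finset.mem_Icc.mpr b3)
      c4 (Finset.mem_Icc.mpr b4) c5 (Finset.mem_Icc.mpr b5) c6 (Finset.mem_Icc.mpr b6) hsum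
    rcases this with h | h | h
    · left; omega
    · right; omega
    · exact absurd s h
  · -- c0 = 1 : ci ∈ {-1,0}
    have s : c1*(c1+1) + c2*(c2+1) + c3*(c3+1) + c4*(c4+1) + c5*(c5+1) + c6*(c6+1) = 0 := by
      linear_combination -h1 + h2
    have z1 := int_zero_of c1 (le_antisymm (by linarith [int_sq_nonneg' c2, int_sq_nonneg' c3, int_sq_nonneg' c4, int_sq_nonneg' c5, int_sq_nonneg' c6]) (int_sq_nonneg' c1))
    have z2 := int_zero_of c2 (le_antisymm (by linarith [int_sq_nonneg' c1, int_sq_nonneg' c3, int_sq_nonneg' c4, int_sq_nonneg' c5, int_sq_nonneg' c6]) (int_sq_nonneg' c2))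
    have z3 := int_zero_of c3 (le_antisymm (by linarith [int_sq_nonneg' c1, int_sq_nonneg' c2, int_sq_nonneg' c4, int_sq_nonneg' c5, int_sq_nonneg' c6]) (int_sq_nonneg' c3))
    have z4 := int_zero_of c4 (le_antisymm (by linarith [int_sq_nonneg' c1, int_sq_nonneg' c2, int_sq_nonneg' c3, int_sq_nonneg' c5, int_sq_nonneg' c6]) (int_sq_nonneg' c4))
    have z5 := int_zero_of c5 (le_antisymm (by linarith [int_sq_nonneg' c1, int_sq_nonneg' c2, int_sq_nonneg' c3, int_sq_nonneg' c4, int_sq_nonneg' c6]) (int_sq_nonneg' c5))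
    have z6 := int_zero_of c6 (le_antisymm (by linarith [int_sq_nonneg' c1, int_sq_nonneg' c2, int_sq_nonneg' c3, int_sq_nonneg' c4, int_sq_nonneg' c5]) (int_sq_nonneg' c6))
    omega
  · -- c0 = 2 : all ci = -1
    have s : (c1+1)*(c1+1) + (c2+1)*(c2+1) + (c3+1)*(c3+1) + (c4+1)*(c4+1) + (c5+1)*(c5+1) + (c6+1)*(c6+1) = 0 := by
      linear_combination -h1 + 2*h2
    have e1 : c1 + 1 = 0 := eq_zero_of_sq_nonpos _ (by linarith [mul_self_nonneg (c2 + 1), mul_self_nonneg (c3 + 1), mul_self_nonneg (c4 + 1), mul_self_nonneg (c5 + 1), mul_self_nonneg (c6 + 1)])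
    have e2 : c2 + 1 = 0 := eq_zero_of_sq_nonpos _ (by linarith [mul_self_nonneg (c1 + 1), mul_self_nonneg (c3 + 1), mul_self_nonneg (c4 + 1), mul_self_nonneg (c5 + 1), mul_self_nonneg (c6 + 1)])
    have e3 : c3 + 1 = 0 := eq_zero_of_sq_nonpos _ (by linarith [mul_self_nonneg (c1 + 1), mul_self_nonneg (c2 + 1), mul_self_nonneg (c4 + 1), mul_self_nonneg (c5 + 1), mul_self_nonneg (c6 + 1)])
    have e4 : c4 + 1 = 0 := eq_zero_of_sq_nonpos _ (by linarith [mul_self_nonneg (c1 + 1), mul_self_nonneg (c2 + 1), mul_self_nonneg (c3 + 1), mul_self_nonneg (c5 + 1), mul_self_nonneg (c6 + 1)])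
    have e5 : c5 + 1 = 0 := eq_zero_of_sq_nonpos _ (by linarith [mul_self_nonneg (c1 + 1), mul_self_nonneg (c2 + 1), mul_self_nonneg (c3 + 1), mul_self_nonneg (c4 + 1), mul_self_nonneg (c6 + 1)])
    omega

/-- For every root `x`, exactly one of `x` and `−x` is a nonnegative integer
linear combination of the simple roots `r₀, …, r₅`. -/
theorem statement_11 (x : Fin 7 → ℤ)
    (h1 : form x x = -2) (h2 : form x kappa = 0) :
    Xor' (∃ a : Fin 6 → ℕ, x = ∑ i, (a i : ℤ) • r i)
      (∃ a : Fin 6 → ℕ, -x = ∑ i, (a i : ℤ) • r i) := by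
  have hk : 3 * x 0 + x 1 + x 2 + x 3 + x 4 + x 5 + x 6 = 0 := by
    have h2' : form x kappa = x 0 * 3 - x 1 * (-1) - x 2 * (-1) - x 3 * (-1) - x 4 * (-1)
        - x 5 * (-1) - x 6 * (-1) := by
      simp [form, kappa, e]
    rw [h2'] at h2
    linarith
  have hk' : 3 * (-x) 0 + (-x) 1 + (-x) 2 + (-x) 3 + (-x) 4 + (-x) 5 + (-x) 6 = 0 := by
    simp only [Pi.neg_apply]; linarith
  have hform : x 0 * x 0 - x 1 * x 1 - x 2 * x 2 - x 3 * x 3 - x 4 * x 4 - x 5 * x 5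
      - x 6 * x 6 = -2 := h1
  have key := sign_lemma (x 0) (x 1) (x 2) (x 3) (x 4) (x 5) (x 6) hform hk
  have hP := pos_char x hk
  have hQ := pos_char (-x) hk'
  simp only [Pi.neg_apply] at hQ
  rcases key with hpos | hneg
  · refine Or.inl ⟨hP.mpr ⟨hpos.1, hpos.2.1, hpos.2.2.1, hpos.2.2.2.1, hpos.2.2.2.2.1,
      hpos.2.2.2.2.2⟩, fun hq => ?_⟩
    have := hQ.mp hq
    have hz0 : x 0 = 0 := by omega
    have hz1 : x 1 = 0 := by omega
    have hz2 : x 2 = 0 := by omega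
    have hz3 : x 3 = 0 := by omega
    have hz4 : x 4 = 0 := by omega
    have hz5 : x 5 = 0 := by omega
    have hz6 : x 6 = 0 := by omega
    rw [hz0, hz1, hz2, hz3, hz4, hz5, hz6] at hform
    norm_num at hform
  · refine Or.inr ⟨hQ.mpr (by refine ⟨?_, ?_, ?_, ?_, ?_, ?_⟩ <;> omega), fun hp => ?_⟩
    have := hP.mp hp
    have hz0 : x 0 = 0 := by omega
    have hz1 : x 1 = 0 := by omega
    have hz2 : x 2 = 0 := by omega
    have hz3 : x 3 = 0 := by omega
    have hz4 : x 4 = 0 := by omega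
    have hz5 : x 5 = 0 := by omega
    have hz6 : x 6 = 0 := by omega
    rw [hz0, hz1, hz2, hz3, hz4, hz5, hz6] at hform
    norm_num at hform
end
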